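/- For the percolation-with-replacement process on the figure eight-graph with parameter p, the survival probability q_∞ = lim_{n→∞} ψ_pⁿ(1) exists (the sequence ψ_pⁿ(1) is monotone decreasing) and is the largest fixed point of ψ_p in [0,1]. In particular q_∞ = 0 for p < 27/32. -/

import Mathlib

/-!
On `[0, 1]` the map `ψ_p` is monotone, so its iterates starting from the top point `1` decrease
and stay above every fixed point; being bounded below by `0` they converge, by continuity to a
fixed point, which is therefore the largest one. A positive fixed point `q` would satisfy
`1 = p q (2 - q)²`, but `q (2 - q)² ≤ 32/27` on `[0, 1]` (with equality at `q = 2/3`), so for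
`p < 27/32` the only fixed point is `0`.
-/

/-- ψ_p(q) = p·q²(2−q)², the survival recursion of the
percolation-with-replacement process on the figure eight-graph. -/
noncomputable def psi (p : ℝ) : ℝ → ℝ := fun q => p * (q ^ 2 * (2 - q) ^ 2)

open Set Filter Function Topology

section IterateFromTop

variable {α : Type*} {f : α → α} {a b : α}

theorem antitone_iterate_of_mapsTo_Icc [Preorder α] (hmaps : MapsTo f (Icc a b) (Icc a b))
    (hmono : MonotoneOn f (Icc a b)) (hab : a ≤ b) : Antitone fun n => f^[n] b := by
  have hmem : ∀ n, f^[n] b ∈ Icc a b := fun n => hmaps.iterate n ⟨hab, le_rfl⟩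
  refine antitone_nat_of_succ_le fun n => ?_
  induction n with
  | zero => exact (hmaps ⟨hab, le_rfl⟩).2
  | succ n ih =>
    simpa only [iterate_succ_apply'] using hmono (hmem (n + 1)) (hmem n) ih

theorem le_iterate_of_isFixedPt [Preorder α] (hmaps : MapsTo f (Icc a b) (Icc a b))
    (hmono : MonotoneOn f (Icc a b)) {x : α} (hx : x ∈ Icc a b) (hfix : IsFixedPt f x) (n : ℕ) :
    x ≤ f^[n] b := by
  induction n with
  | zero => exact hx.2
  | succ n ih =>
    rw [iterate_succ_apply', ← hfix.eq]
    exact hmono hx (hmaps.iterate n ⟨hx.1.trans hx.2, le_rfl⟩) ih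

variable [ConditionallyCompleteLinearOrder α] [TopologicalSpace α] [OrderTopology α]

theorem tendsto_iterate_iInf (hmaps : MapsTo f (Icc a b) (Icc a b))
    (hmono : MonotoneOn f (Icc a b)) (hab : a ≤ b) :
    Tendsto (fun n => f^[n] b) atTop (𝓝 (⨅ n, f^[n] b)) :=
  tendsto_atTop_ciInf (antitone_iterate_of_mapsTo_Icc hmaps hmono hab)
    ⟨a, by rintro _ ⟨n, rfl⟩; exact (hmaps.iterate n ⟨hab, le_rfl⟩).1⟩

theorem isGreatest_iInf_iterate (hmaps : MapsTo f (Icc a b) (Icc a b))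
    (hmono : MonotoneOn f (Icc a b)) (hcont : ContinuousOn f (Icc a b)) (hab : a ≤ b) :
    IsGreatest (Icc a b ∩ fixedPoints f) (⨅ n, f^[n] b) := by
  set y := ⨅ n, f^[n] b
  have hmem : ∀ n, f^[n] b ∈ Icc a b := fun n => hmaps.iterate n ⟨hab, le_rfl⟩
  have htend := tendsto_iterate_iInf hmaps hmono hab
  have hy : y ∈ Icc a b := isClosed_Icc.mem_of_tendsto htend (Eventually.of_forall hmem)
  have hfix : f y = y := by
    have himage : Tendsto (fun n => f (f^[n] b)) atTop (𝓝 (f y)) :=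
      (hcont y hy).tendsto.comp (tendsto_nhdsWithin_iff.2 ⟨htend, Eventually.of_forall hmem⟩)
    refine tendsto_nhds_unique himage ?_
    simpa only [comp_def, iterate_succ_apply'] using htend.comp (tendsto_add_atTop_nat 1)
  exact ⟨⟨hy, hfix⟩, fun x ⟨hx, hxfix⟩ =>
    le_ciInf (le_iterate_of_isFixedPt hmaps hmono hx hxfix)⟩

end IterateFromTop

theorem continuous_psi (p : ℝ) : Continuous (psi p) := by
  unfold psi; fun_prop

theorem monotoneOn_psi {p : ℝ} (hp : 0 ≤ p) : MonotoneOn (psi p) (Icc 0 1) := by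
  intro a ⟨ha0, _⟩ b ⟨_, hb1⟩ hab
  have hprod : a * (2 - a) ≤ b * (2 - b) := by nlinarith
  have hsq : (a * (2 - a)) ^ 2 ≤ (b * (2 - b)) ^ 2 := pow_le_pow_left₀ (by nlinarith) hprod 2
  unfold psi
  rw [← mul_pow, ← mul_pow]
  exact mul_le_mul_of_nonneg_left hsq hp

theorem mapsTo_psi {p : ℝ} (hp : p ∈ Icc (0 : ℝ) 1) : MapsTo (psi p) (Icc 0 1) (Icc 0 1) := by
  intro q ⟨hq0, hq1⟩
  have hprod : q ^ 2 * (2 - q) ^ 2 ≤ 1 := by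
    rw [← mul_pow]
    exact pow_le_one₀ (by nlinarith) (by nlinarith [sq_nonneg (1 - q)])
  unfold psi
  exact ⟨mul_nonneg hp.1 (by positivity), mul_le_one₀ hp.2 (by positivity) hprod⟩

theorem mul_two_sub_sq_le {q : ℝ} (hq : q ≤ 8 / 3) : q * (2 - q) ^ 2 ≤ 32 / 27 := by
  -- 32/27 - q (2 - q)² = (3q - 2)² (8 - 3q) / 27
  nlinarith [mul_nonneg (sq_nonneg (3 * q - 2)) (show (0 : ℝ) ≤ 8 - 3 * q by linarith)]

theorem eq_zero_of_psi_eq_self {p q : ℝ} (hp : p < 27 / 32) (hq : q ∈ Icc (0 : ℝ) 1)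
    (hfix : psi p q = q) : q = 0 := by
  by_contra hne
  have hpos : 0 < q := lt_of_le_of_ne hq.1 (Ne.symm hne)
  have hone : p * (q * (2 - q) ^ 2) = 1 := by
    apply mul_left_cancel₀ hpos.ne'
    unfold psi at hfix
    linear_combination hfix
  have hbound := mul_two_sub_sq_le (q := q) (by linarith [hq.2])
  have hprod_pos : 0 < q * (2 - q) ^ 2 := mul_pos hpos (pow_pos (by linarith [hq.2]) 2)
  nlinarith [mul_pos (sub_pos.2 hp) hprod_pos]

/-- The sequence q_n = ψ_pⁿ(1) is monotone decreasing, its limit q_∞ exists and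
is the largest fixed point of ψ_p in [0,1]; in particular q_∞ = 0 for p < 27/32. -/
theorem survival_probability (p : ℝ) (hp : p ∈ Set.Icc (0:ℝ) 1) :
    Antitone (fun n : ℕ => (psi p)^[n] 1) ∧
    ∃ qinf : ℝ,
      Filter.Tendsto (fun n : ℕ => (psi p)^[n] 1) Filter.atTop (nhds qinf) ∧
      psi p qinf = qinf ∧
      (∀ q ∈ Set.Icc (0:ℝ) 1, psi p q = q → q ≤ qinf) ∧
      (p < 27 / 32 → qinf = 0) := by
  have hmaps := mapsTo_psi hp
  have hmono := monotoneOn_psi hp.1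
  obtain ⟨⟨hmem, hfix⟩, hgreatest⟩ :=
    isGreatest_iInf_iterate hmaps hmono (continuous_psi p).continuousOn zero_le_one
  exact ⟨antitone_iterate_of_mapsTo_Icc hmaps hmono zero_le_one, _,
    tendsto_iterate_iInf hmaps hmono zero_le_one, hfix,
    fun q hq hfq => hgreatest ⟨hq, hfq⟩, fun hlt => eq_zero_of_psi_eq_self hlt hmem hfix⟩
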